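/- arXiv:1112.1181 — 3 statements merged into one kernel-verified Lean document; each statement's English description precedes it below -/
import Mathlib

section
/- If the MQMS system is strongly stable under some server allocation policy and the time-average arrival rate vector Ā = lim_{t→∞} (1/t) Σ_{τ=1}^t E[A(τ)] exists, then for every α ∈ ℝ^N with nonnegative entries, Σ_{n=1}^N α_n Ā_n ≤ b(α) = Σ_{s∈S} π_s · max_{I∈𝓘} Σ_{n=1}^N Σ_{k=1}^K α_n (C_s)_{n,k} I_{n,k}. -/
open MeasureTheory ProbabilityTheory Finset Filter

noncomputable section

/-- Channel state space `S`: N×K matrices with entries in {0,…,M}. -/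
abbrev ChanState (N K M : ℕ) := Fin N → Fin K → Fin (M + 1)

/-- The real-valued channel matrix `C_s` of a channel state `s`. -/
def Cmat {N K M : ℕ} (s : ChanState N K M) : Fin N → Fin K → ℝ :=
  fun n k => ((s n k : ℕ) : ℝ)

/-- The 0/1 allocation matrix `I ∈ 𝓘` determined by an assignment `f` of servers to
queues: column `k` has its single 1 in row `f k`. -/
def allocMat {N K : ℕ} (f : Fin K → Fin N) : Fin N → Fin K → ℝ :=
  fun n k => if f k = n then 1 else 0

/-- The weight `Σ_n Σ_k α_n c_{n,k} I_{n,k}` of the allocation matrix `I = allocMat f`. -/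
def weight {N K : ℕ} (α : Fin N → ℝ) (c : Fin N → Fin K → ℝ) (f : Fin K → Fin N) : ℝ :=
  ∑ n, ∑ k, α n * c n k * allocMat f n k

/-- `max_{I ∈ 𝓘} Σ_n Σ_k α_n c_{n,k} I_{n,k}`. -/
def maxWeight {N K : ℕ} [NeZero N] (α : Fin N → ℝ) (c : Fin N → Fin K → ℝ) : ℝ :=
  Finset.univ.sup' Finset.univ_nonempty (weight α c)

/-- `b(α) = Σ_{s∈S} π_s max_{I∈𝓘} Σ_n Σ_k α_n (C_s)_{n,k} I_{n,k}`. -/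
def bCoef {N K M : ℕ} [NeZero N] (π : ChanState N K M → ℝ) (α : Fin N → ℝ) : ℝ :=
  ∑ s : ChanState N K M, π s * maxWeight α (Cmat s)

/-- The rate vector `R^{(g)}` of the deterministic policy `g`. -/
def rateVec {N K M : ℕ} (π : ChanState N K M → ℝ)
    (g : ChanState N K M → Fin K → Fin N) : Fin N → ℝ :=
  fun n => ∑ s : ChanState N K M, π s * ∑ k, Cmat s n k * allocMat (g s) n k

/-- The achievable-rate polytope `P`, the convex hull of the rate vectors of the
deterministic policies. -/
def ratePolytope {N K M : ℕ} (π : ChanState N K M → ℝ) : Set (Fin N → ℝ) :=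
  convexHull ℝ {r | ∃ g : ChanState N K M → Fin K → Fin N, r = rateVec π g}

/-- `W`: products of N−1 factors from {0,…,M}, viewed inside ℝ. -/
def Wset (N M : ℕ) : Set ℝ :=
  {w | ∃ m : Fin (N - 1) → ℕ, (∀ j, m j ≤ M) ∧ w = ∏ j, (m j : ℝ)}

/-- The set `V` of nonnegative weight vectors from the paper. -/
def Vset (N M : ℕ) : Set (Fin N → ℝ) :=
  {α | (∀ n, 0 ≤ α n) ∧
    ∀ U : Finset (Fin N), U.Nonempty → U ≠ Finset.univ →
      (∃ i ∈ U, α i ≠ 0) → (∃ j ∈ Uᶜ, α j ≠ 0) →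
      ∃ i ∈ U, ∃ j ∈ Uᶜ, ∃ m ∈ Finset.Icc 1 M, ∃ n ∈ Finset.Icc 1 M,
        0 < α i ∧ 0 < α j ∧ α i * (m : ℝ) = α j * (n : ℝ)}

/-- The product Bernoulli distribution on ON-OFF (M = 1) channel states. -/
def bernoulliPi {N K : ℕ} (p : Fin N → Fin K → ℝ) : ChanState N K 1 → ℝ :=
  fun s => ∏ n, ∏ k, (if (s n k : ℕ) = 1 then p n k else 1 - p n k)

end

/-!
The weighted queue backlog `V(t) = Σ_n α_n X_n(t)` is a linear Lyapunov function. Since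
`max (x - d) 0 ≥ x - d` and the served work is weighted by at most the max-weight value of the
current channel state, `E V(t+1) ≥ E V(t) + Σ_n α_n E A_n(t+1) - b(α)`; telescoping gives
`Σ_{τ ≤ t} Σ_n α_n E A_n(τ) ≤ E V(t) + t b(α)`. Strong stability bounds the Cesàro means of
`E V(t) ≥ 0`, so `E V(t) ≤ ε t` for infinitely many `t`, and dividing by `t` along those times
yields `Σ_n α_n Ā_n ≤ b(α) + ε`.
-/

theorem sum_Icc_le_of_drift {v a : ℕ → ℝ} {b : ℝ} (hdrift : ∀ t, v t + a (t + 1) - b ≤ v (t + 1))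
    (h0 : 0 ≤ v 0) (t : ℕ) : ∑ τ ∈ Icc 1 t, a τ ≤ v t + t * b := by
  induction t with
  | zero => simpa using h0
  | succ t ih =>
    rw [sum_Icc_succ_top (Nat.le_add_left 1 t)]
    push_cast
    linarith [hdrift t]

theorem frequently_le_mul_of_sum_range_le {u : ℕ → ℝ} {B : ℝ} (hu : ∀ t, 0 ≤ u t)
    (hB : ∀ t, 1 ≤ t → ∑ τ ∈ range t, u τ ≤ B * t) {ε : ℝ} (hε : 0 < ε) :
    ∃ᶠ t in atTop, u t ≤ ε * t := by
  rw [frequently_atTop]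
  intro T
  by_contra! hbig
  obtain ⟨t₀, ht₀⟩ := exists_nat_gt (2 * B / ε)
  set t := max t₀ (max T 1)
  have ht₀t : (t₀ : ℝ) ≤ t := by exact_mod_cast le_max_left _ _
  have hTt : T ≤ t := le_trans (le_max_left _ _) (le_max_right _ _)
  have h1t : 1 ≤ t := le_trans (le_max_right _ _) (le_max_right _ _)
  have ht : 0 < (t : ℝ) := by exact_mod_cast h1t
  -- on the `t` times in `[t, 2t)` the sequence exceeds `ε t`, so the sum is quadratic in `t`
  have hquad : t * (ε * t) ≤ B * (2 * t : ℕ) :=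
    calc t * (ε * t) = ∑ _τ ∈ Ico t (2 * t), ε * t := by
          rw [sum_const, Nat.card_Ico, nsmul_eq_mul, show 2 * t - t = t by omega]
      _ ≤ ∑ τ ∈ Ico t (2 * t), u τ := sum_le_sum fun τ hτ => by
          have hτ : t ≤ τ := (mem_Ico.1 hτ).1
          have : ε * t ≤ ε * τ := by gcongr
          linarith [hbig τ (hTt.trans hτ)]
      _ ≤ ∑ τ ∈ range (2 * t), u τ :=
          sum_le_sum_of_subset_of_nonneg (fun τ hτ => mem_range.2 (mem_Ico.1 hτ).2)
            fun τ _ _ => hu τ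
      _ ≤ B * (2 * t : ℕ) := hB _ (by omega)
  push_cast at hquad
  have : ε * t ≤ 2 * B := by nlinarith
  rw [div_lt_iff₀ hε] at ht₀
  nlinarith

theorem le_of_tendsto_div_of_le_add {s v : ℕ → ℝ} {L b : ℝ}
    (hs : Tendsto (fun t : ℕ => s t / t) atTop (nhds L)) (hsv : ∀ t, s t ≤ v t + t * b)
    (hv : ∀ ε, 0 < ε → ∃ᶠ t in atTop, v t ≤ ε * t) : L ≤ b := by
  refine le_of_forall_pos_le_add fun ε hε => le_of_tendsto_of_frequently hs ?_
  refine ((hv ε hε).and_eventually (eventually_gt_atTop 0)).mono fun t ⟨hvt, ht⟩ => ?_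
  rw [div_le_iff₀ (by exact_mod_cast ht)]
  linarith [hsv t]

theorem sum_range_sum_mul_le {ι : Type*} [Fintype ι] {α : ι → ℝ} (hα : ∀ i, 0 ≤ α i)
    {m : ι → ℕ → ℝ} {B : ι → ℝ} (hB : ∀ i t, 1 ≤ t → (∑ τ ∈ range t, m i τ) / t ≤ B i)
    (t : ℕ) (ht : 1 ≤ t) : ∑ τ ∈ range t, ∑ i, α i * m i τ ≤ (∑ i, α i * B i) * t := by
  have ht' : (0 : ℝ) < t := by exact_mod_cast ht
  calc ∑ τ ∈ range t, ∑ i, α i * m i τ = ∑ i, α i * ∑ τ ∈ range t, m i τ := by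
        simp_rw [mul_sum]; exact sum_comm
    _ ≤ ∑ i, α i * (B i * t) := sum_le_sum fun i _ =>
        mul_le_mul_of_nonneg_left ((div_le_iff₀ ht').1 (hB i t ht)) (hα i)
    _ = (∑ i, α i * B i) * t := by simp_rw [sum_mul, mul_assoc]

section FiniteLaw

variable {Ω S : Type*} [MeasurableSpace Ω] {μ : Measure Ω} [IsFiniteMeasure μ]
  [Fintype S] [MeasurableSpace S] [MeasurableSingletonClass S]

theorem integrable_comp_of_finite {C : Ω → S} (hC : Measurable C) (f : S → ℝ) :
    Integrable (fun ω => f (C ω)) μ :=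
  Integrable.of_finite.comp_measurable hC

theorem integral_comp_eq_sum {C : Ω → S} (hC : Measurable C) {π : S → ℝ} (hπ : ∀ s, 0 ≤ π s)
    (hlaw : ∀ s, μ {ω | C ω = s} = ENNReal.ofReal (π s)) (f : S → ℝ) :
    ∫ ω, f (C ω) ∂μ = ∑ s, π s * f s := by
  rw [← integral_map hC.aemeasurable Integrable.of_finite.aestronglyMeasurable,
    integral_fintype Integrable.of_finite]
  refine sum_congr rfl fun s _ => ?_
  rw [measureReal_def, Measure.map_apply hC (measurableSet_singleton s)]
  simp [Set.preimage, hlaw, hπ s]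

end FiniteLaw

theorem sum_mul_integral_service_le_bCoef {N K M : ℕ} [NeZero N] {Ω : Type*} [MeasurableSpace Ω]
    {μ : Measure Ω} [IsFiniteMeasure μ] {π : ChanState N K M → ℝ} (hπ : ∀ s, 0 ≤ π s)
    {C : Ω → ChanState N K M} {I : Ω → Fin K → Fin N} (hC : Measurable C) (hI : Measurable I)
    (hlaw : ∀ s, μ {ω | C ω = s} = ENNReal.ofReal (π s)) (α : Fin N → ℝ) :
    ∑ n, α n * ∫ ω, ∑ k, Cmat (C ω) n k * allocMat (I ω) n k ∂μ ≤ bCoef π α := by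
  have hint (f : ChanState N K M × (Fin K → Fin N) → ℝ) :
      Integrable (fun ω => f (C ω, I ω)) μ :=
    integrable_comp_of_finite (hC.prodMk hI) f
  calc ∑ n, α n * ∫ ω, ∑ k, Cmat (C ω) n k * allocMat (I ω) n k ∂μ
      = ∫ ω, weight α (Cmat (C ω)) (I ω) ∂μ := by
        simp only [weight]
        rw [integral_finsetSum _ fun n _ =>
          hint fun p => ∑ k, α n * Cmat p.1 n k * allocMat p.2 n k]
        simp only [← integral_const_mul, mul_sum, mul_assoc]
    _ ≤ ∫ ω, maxWeight α (Cmat (C ω)) ∂μ :=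
        integral_mono (hint fun p => weight α (Cmat p.1) p.2)
          (hint fun p => maxWeight α (Cmat p.1)) fun ω => le_sup' _ (mem_univ _)
    _ = bCoef π α := integral_comp_eq_sum hC hπ hlaw fun s => maxWeight α (Cmat s)

section Queue

variable {ι Ω : Type*} {X A D : ℕ → Ω → ι → ℝ}
  (hX : ∀ t ω i, X (t + 1) ω i = max (X t ω i - D (t + 1) ω i) 0 + A (t + 1) ω i)
include hX

theorem queue_nonneg (h0 : ∀ ω i, 0 ≤ X 0 ω i) (hA : ∀ t ω i, 0 ≤ A t ω i) :
    ∀ t ω i, 0 ≤ X t ω i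
  | 0 => h0
  | t + 1 => fun ω i => (hX t ω i) ▸ add_nonneg (le_max_right _ _) (hA _ ω i)

variable [MeasurableSpace Ω] {μ : Measure Ω}

theorem integrable_queue (h0 : ∀ i, Integrable (X 0 · i) μ) (hD : ∀ t i, Integrable (D t · i) μ)
    (hA : ∀ t i, Integrable (A t · i) μ) : ∀ t i, Integrable (X t · i) μ
  | 0 => h0
  | t + 1 => fun i => by
    simp_rw [hX]
    exact (((integrable_queue h0 hD hA t i).sub (hD _ i)).sup (integrable_zero _ _ μ)).add (hA _ i)

theorem integral_queue_drift (hXi : ∀ t i, Integrable (X t · i) μ)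
    (hD : ∀ t i, Integrable (D t · i) μ) (hA : ∀ t i, Integrable (A t · i) μ) (t : ℕ) (i : ι) :
    ∫ ω, X t ω i ∂μ - ∫ ω, D (t + 1) ω i ∂μ + ∫ ω, A (t + 1) ω i ∂μ ≤ ∫ ω, X (t + 1) ω i ∂μ := by
  have hXD : Integrable (fun ω => X t ω i - D (t + 1) ω i) μ := (hXi t i).sub (hD _ i)
  rw [← integral_sub (hXi t i) (hD _ i), ← integral_add hXD (hA _ i)]
  refine integral_mono (hXD.add (hA _ i)) (hXi _ i) fun ω => ?_
  rw [hX]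
  linarith [le_max_left (X t ω i - D (t + 1) ω i) 0]

theorem weighted_integral_queue_drift [Fintype ι] (hXi : ∀ t i, Integrable (X t · i) μ)
    (hD : ∀ t i, Integrable (D t · i) μ) (hA : ∀ t i, Integrable (A t · i) μ)
    {α : ι → ℝ} (hα : ∀ i, 0 ≤ α i) (t : ℕ) :
    ∑ i, α i * ∫ ω, X t ω i ∂μ - ∑ i, α i * ∫ ω, D (t + 1) ω i ∂μ
      + ∑ i, α i * ∫ ω, A (t + 1) ω i ∂μ ≤ ∑ i, α i * ∫ ω, X (t + 1) ω i ∂μ := by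
  simp only [← sum_sub_distrib, ← sum_add_distrib, ← mul_sub, ← mul_add]
  exact sum_le_sum fun i _ =>
    mul_le_mul_of_nonneg_left (integral_queue_drift hX hXi hD hA t i) (hα i)

end Queue

theorem stmt_2_general
    {N K M : ℕ} [NeZero N]
    (π : ChanState N K M → ℝ) (hπ0 : ∀ s, 0 ≤ π s)
    {Ω : Type} [MeasurableSpace Ω] (μ : Measure Ω) [IsProbabilityMeasure μ]
    (X0 : Ω → Fin N → ℝ) (hX0nn : ∀ ω n, 0 ≤ X0 ω n)
    (hX0int : ∀ n, Integrable (fun ω => X0 ω n) μ)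
    (A : ℕ → Ω → Fin N → ℝ) (hAm : ∀ t, Measurable (A t))
    (hAnn : ∀ t ω n, 0 ≤ A t ω n)
    (hA2int : ∀ t n, Integrable (fun ω => (A t ω n) ^ 2) μ)
    (Cch : ℕ → Ω → ChanState N K M) (hCm : ∀ t, Measurable (Cch t))
    (hCdist : ∀ t, 1 ≤ t → ∀ s, μ {ω | Cch t ω = s} = ENNReal.ofReal (π s))
    (Ipol : ℕ → Ω → Fin K → Fin N) (hIm : ∀ t, Measurable (Ipol t))
    (X : ℕ → Ω → Fin N → ℝ) (hX0eq : X 0 = X0)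
    (hXrec : ∀ t, 1 ≤ t → ∀ ω n,
      X t ω n = max (X (t - 1) ω n - ∑ k, Cmat (Cch t ω) n k * allocMat (Ipol t ω) n k) 0
        + A t ω n)
    (hstable : ∀ n, ∃ B : ℝ, ∀ t : ℕ, 1 ≤ t →
      (∑ τ ∈ Finset.range t, ∫ ω, X τ ω n ∂μ) / t ≤ B)
    (Abar : Fin N → ℝ)
    (hAbar : ∀ n, Filter.Tendsto
      (fun t : ℕ => (∑ τ ∈ Finset.Icc 1 t, ∫ ω, A τ ω n ∂μ) / t)
      Filter.atTop (nhds (Abar n)))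
    (α : Fin N → ℝ) (hα : ∀ n, 0 ≤ α n) :
    ∑ n, α n * Abar n ≤ bCoef π α := by
  set D : ℕ → Ω → Fin N → ℝ := fun t ω n => ∑ k, Cmat (Cch t ω) n k * allocMat (Ipol t ω) n k
  have hX (t : ℕ) (ω : Ω) (n : Fin N) :
      X (t + 1) ω n = max (X t ω n - D (t + 1) ω n) 0 + A (t + 1) ω n := by
    simpa using hXrec (t + 1) t.succ_pos ω n
  have hAi (t : ℕ) (n : Fin N) : Integrable (A t · n) μ :=
    ((memLp_two_iff_integrable_sq ((measurable_pi_apply n).comp (hAm t)).aestronglyMeasurable).2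
      (hA2int t n)).integrable one_le_two
  have hDi (t : ℕ) (n : Fin N) : Integrable (D t · n) μ :=
    integrable_comp_of_finite ((hCm t).prodMk (hIm t))
      fun p : ChanState N K M × (Fin K → Fin N) => ∑ k, Cmat p.1 n k * allocMat p.2 n k
  have hXi := integrable_queue hX (hX0eq ▸ hX0int) hDi hAi
  set v : ℕ → ℝ := fun t => ∑ n, α n * ∫ ω, X t ω n ∂μ
  have hv (t : ℕ) : 0 ≤ v t := sum_nonneg fun n _ => mul_nonneg (hα n)
    (integral_nonneg fun ω => queue_nonneg hX (hX0eq ▸ hX0nn) hAnn t ω n)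
  have hdrift (t : ℕ) : v t + ∑ n, α n * ∫ ω, A (t + 1) ω n ∂μ - bCoef π α ≤ v (t + 1) := by
    linarith [weighted_integral_queue_drift hX hXi hDi hAi hα t,
      sum_mul_integral_service_le_bCoef hπ0 (hCm (t + 1)) (hIm (t + 1))
        (hCdist (t + 1) t.succ_pos) α]
  choose B hB using hstable
  refine le_of_tendsto_div_of_le_add ?_
    (sum_Icc_le_of_drift (a := fun t => ∑ n, α n * ∫ ω, A t ω n ∂μ) hdrift (hv 0))
    fun ε hε => frequently_le_mul_of_sum_range_le hv (sum_range_sum_mul_le hα hB) hε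
  simp_rw [sum_comm (s := Icc 1 _), ← mul_sum, sum_div, mul_div_assoc]
  exact tendsto_finsetSum _ fun n _ => (hAbar n).const_mul (α n)

/-- under strong stability, the time-average mean arrival rate vector
satisfies the inequality Σ_n α_n Ā_n ≤ b(α) for every nonnegative weight vector α. -/
theorem stmt_2
    {N K M : ℕ} [NeZero N] [NeZero K] [NeZero M]
    (π : ChanState N K M → ℝ) (hπ0 : ∀ s, 0 ≤ π s) (hπ1 : ∑ s : ChanState N K M, π s = 1)
    {Ω : Type} [MeasurableSpace Ω] (μ : Measure Ω) [IsProbabilityMeasure μ]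
    (X0 : Ω → Fin N → ℝ) (hX0m : Measurable X0) (hX0nn : ∀ ω n, 0 ≤ X0 ω n)
    (hX0int : ∀ n, Integrable (fun ω => X0 ω n) μ)
    (A : ℕ → Ω → Fin N → ℝ) (hAm : ∀ t, Measurable (A t))
    (hAnn : ∀ t ω n, 0 ≤ A t ω n)
    (Amax : ℝ)
    (hA2int : ∀ t n, Integrable (fun ω => (A t ω n) ^ 2) μ)
    (hA2 : ∀ t n, ∫ ω, (A t ω n) ^ 2 ∂μ ≤ Amax ^ 2)
    (Cch : ℕ → Ω → ChanState N K M) (hCm : ∀ t, Measurable (Cch t))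
    (hCdist : ∀ t, 1 ≤ t → ∀ s, μ {ω | Cch t ω = s} = ENNReal.ofReal (π s))
    (Ipol : ℕ → Ω → Fin K → Fin N) (hIm : ∀ t, Measurable (Ipol t))
    (X : ℕ → Ω → Fin N → ℝ) (hX0eq : X 0 = X0)
    (hXrec : ∀ t, 1 ≤ t → ∀ ω n,
      X t ω n = max (X (t - 1) ω n - ∑ k, Cmat (Cch t ω) n k * allocMat (Ipol t ω) n k) 0
        + A t ω n)
    (hstable : ∀ n, ∃ B : ℝ, ∀ t : ℕ, 1 ≤ t →
      (∑ τ ∈ Finset.range t, ∫ ω, X τ ω n ∂μ) / t ≤ B)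
    (Abar : Fin N → ℝ)
    (hAbar : ∀ n, Filter.Tendsto
      (fun t : ℕ => (∑ τ ∈ Finset.Icc 1 t, ∫ ω, A τ ω n ∂μ) / t)
      Filter.atTop (nhds (Abar n)))
    (α : Fin N → ℝ) (hα : ∀ n, 0 ≤ α n) :
    ∑ n, α n * Abar n ≤ bCoef π α :=
  stmt_2_general π hπ0 μ X0 hX0nn hX0int A hAm hAnn hA2int Cch hCm hCdist Ipol hIm X hX0eq hXrec
    hstable Abar hAbar α hα
end

section
/- Consider the MQMS system with ON-OFF channels (M = 1) whose channel entries are mutually independent Bernoulli random variables: for each t, the entries C_{n,k}(t) are independent with P(C_{n,k}(t) = 1) = p_{n,k}, so that π is the corresponding product distribution on S. If the system is strongly stable under some server allocation policy and the time-average arrival rate vector Ā = lim_{t→∞} (1/t) Σ_{τ=1}^t E[A(τ)] exists, then for every nonempty subset Q ⊆ {1,…,N}: Σ_{n∈Q} Ā_n ≤ K − Σ_{k=1}^K ∏_{n∈Q} (1 − p_{n,k}). -/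
/-!
Summing the queue recursion over `Q` shows that each slot the expected backlog of `Q` grows by at
least the expected arrivals to `Q` minus the expected service to `Q`. A server serves at most one
queue, and can serve one in `Q` only if one of its channels to `Q` is ON, which by independence
happens with probability `1 - ∏_{n ∈ Q} (1 - p_{n,k})`. If the arrival rate to `Q` exceeded
`K - Σ_k ∏_{n ∈ Q} (1 - p_{n,k})`, the expected backlog would grow linearly, so its Cesàro means
would grow linearly too, contradicting strong stability.
-/

open MeasureTheory ProbabilityTheory Finset Filter

section BernoulliProduct

theorem sum_pi_prod_prod {α β γ R : Type*} [Fintype α] [Fintype β] [Fintype γ] [DecidableEq α]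
    [DecidableEq β] [CommSemiring R] (w : α → β → γ → R) :
    ∑ s : α → β → γ, ∏ a, ∏ b, w a b (s a b) = ∏ a, ∏ b, ∑ v, w a b v := by
  simp only [Fintype.prod_sum]

theorem sum_bernoulliPi_mul_prod_prod {N K : ℕ} (p : Fin N → Fin K → ℝ)
    (f : Fin N → Fin K → Fin 2 → ℝ) :
    ∑ s : ChanState N K 1, bernoulliPi p s * ∏ n, ∏ k, f n k (s n k)
      = ∏ n, ∏ k, ((1 - p n k) * f n k 0 + p n k * f n k 1) := by
  simp only [bernoulliPi, ← prod_mul_distrib]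
  rw [sum_pi_prod_prod (fun n k (v : Fin 2) => (if (v : ℕ) = 1 then p n k else 1 - p n k) * f n k v)]
  simp [Fin.sum_univ_two]

theorem sum_bernoulliPi {N K : ℕ} (p : Fin N → Fin K → ℝ) :
    ∑ s : ChanState N K 1, bernoulliPi p s = 1 := by
  simpa using sum_bernoulliPi_mul_prod_prod p fun _ _ _ => 1

theorem sum_bernoulliPi_mul_prod_one_sub {N K : ℕ} (p : Fin N → Fin K → ℝ)
    (Q : Finset (Fin N)) (k₀ : Fin K) :
    ∑ s : ChanState N K 1, bernoulliPi p s * ∏ n ∈ Q, (1 - Cmat s n k₀)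
      = ∏ n ∈ Q, (1 - p n k₀) := by
  classical
  set g : Fin N → Fin K → Fin 2 → ℝ := fun n k v =>
    if k = k₀ then (if n ∈ Q then 1 - (v : ℝ) else 1) else 1
  have hg : ∀ n k, (1 - p n k) * g n k 0 + p n k * g n k 1
      = if k = k₀ then (if n ∈ Q then 1 - p n k else 1) else 1 := by
    intro n k
    simp only [g]
    split_ifs <;> simp
  have key := sum_bernoulliPi_mul_prod_prod p g
  simp only [hg] at key
  simpa [g, prod_ite_mem, Cmat] using key

theorem bernoulliPi_nonneg {N K : ℕ} {p : Fin N → Fin K → ℝ}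
    (hp : ∀ n k, p n k ∈ Set.Icc (0 : ℝ) 1) (s : ChanState N K 1) : 0 ≤ bernoulliPi p s :=
  prod_nonneg fun n _ => prod_nonneg fun k _ => by
    obtain ⟨h₀, h₁⟩ := hp n k
    split_ifs <;> linarith

end BernoulliProduct

section FiniteRandomVariable

variable {Ω α : Type*} [MeasurableSpace Ω] {μ : Measure Ω} [IsFiniteMeasure μ] [Fintype α]
  [MeasurableSpace α] [MeasurableSingletonClass α] {g : Ω → α}

theorem integrable_comp_of_fintype (hg : Measurable g) (F : α → ℝ) :
    Integrable (fun ω => F (g ω)) μ :=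
  (Integrable.of_finite (μ := μ.map g)).comp_measurable hg

theorem integral_comp_eq_sum_s7 (hg : Measurable g) {q : α → ℝ} (hq : ∀ a, 0 ≤ q a)
    (hdist : ∀ a, μ {ω | g ω = a} = ENNReal.ofReal (q a)) (F : α → ℝ) :
    ∫ ω, F (g ω) ∂μ = ∑ a, q a * F a := by
  rw [← integral_map hg.aemeasurable (measurable_of_finite F).aestronglyMeasurable,
    integral_fintype Integrable.of_finite]
  refine sum_congr rfl fun a _ => ?_
  rw [measureReal_def, Measure.map_apply hg (measurableSet_singleton a), Set.preimage]
  simp only [Set.mem_singleton_iff]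
  rw [hdist, ENNReal.toReal_ofReal (hq a), smul_eq_mul]

end FiniteRandomVariable

section Service

def service {N K M : ℕ} (s : ChanState N K M) (f : Fin K → Fin N) (n : Fin N) : ℝ :=
  ∑ k, Cmat s n k * allocMat f n k

theorem Cmat_nonneg {N K M : ℕ} (s : ChanState N K M) (n : Fin N) (k : Fin K) :
    0 ≤ Cmat s n k :=
  Nat.cast_nonneg _

theorem Cmat_le_one {N K : ℕ} (s : ChanState N K 1) (n : Fin N) (k : Fin K) :
    Cmat s n k ≤ 1 := by
  simpa [Cmat] using Fin.is_le (s n k)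

theorem sum_mul_allocMat {N K : ℕ} (c : Fin N → Fin K → ℝ) (f : Fin K → Fin N)
    (Q : Finset (Fin N)) (k : Fin K) :
    ∑ n ∈ Q, c n k * allocMat f n k = if f k ∈ Q then c (f k) k else 0 := by
  simp [allocMat, mul_ite, eq_comm]

theorem le_one_sub_prod_one_sub {ι : Type*} {Q : Finset ι} {x : ι → ℝ}
    (hx : ∀ n ∈ Q, x n ∈ Set.Icc (0 : ℝ) 1) {i : ι} (hi : i ∈ Q) :
    x i ≤ 1 - ∏ n ∈ Q, (1 - x n) := by
  have := prod_le_prod_of_subset_of_le_one (singleton_subset_iff.2 hi)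
    (fun n hn => sub_nonneg.2 (hx n hn).2) (fun n hn _ => sub_le_self 1 (hx n hn).1)
  rw [prod_singleton] at this
  linarith

theorem sum_service_le {N K : ℕ} (s : ChanState N K 1) (f : Fin K → Fin N) (Q : Finset (Fin N)) :
    ∑ n ∈ Q, service s f n ≤ ∑ k, (1 - ∏ n ∈ Q, (1 - Cmat s n k)) := by
  have hC : ∀ k, ∀ n ∈ Q, Cmat s n k ∈ Set.Icc (0 : ℝ) 1 :=
    fun k n _ => ⟨Cmat_nonneg s n k, Cmat_le_one s n k⟩
  simp only [service]
  rw [sum_comm]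
  refine sum_le_sum fun k _ => ?_
  rw [sum_mul_allocMat]
  split_ifs with hk
  · exact le_one_sub_prod_one_sub (hC k) hk
  · exact sub_nonneg.2 (prod_le_one (fun n hn => sub_nonneg.2 (hC k n hn).2)
      fun n hn => sub_le_self 1 (hC k n hn).1)

theorem integrable_service {N K M : ℕ} {Ω : Type*} [MeasurableSpace Ω] {μ : Measure Ω}
    [IsFiniteMeasure μ] {C : Ω → ChanState N K M} (hC : Measurable C) {I : Ω → Fin K → Fin N}
    (hI : Measurable I) (n : Fin N) : Integrable (fun ω => service (C ω) (I ω) n) μ :=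
  integrable_comp_of_fintype (hC.prodMk hI) fun sf => service sf.1 sf.2 n

theorem integral_sum_service_le {N K : ℕ} {p : Fin N → Fin K → ℝ}
    (hp : ∀ n k, p n k ∈ Set.Icc (0 : ℝ) 1) {Ω : Type*} [MeasurableSpace Ω] {μ : Measure Ω}
    [IsFiniteMeasure μ] {C : Ω → ChanState N K 1} (hC : Measurable C)
    (hdist : ∀ s, μ {ω | C ω = s} = ENNReal.ofReal (bernoulliPi p s))
    {I : Ω → Fin K → Fin N} (hI : Measurable I) (Q : Finset (Fin N)) :
    ∑ n ∈ Q, ∫ ω, service (C ω) (I ω) n ∂μ ≤ K - ∑ k, ∏ n ∈ Q, (1 - p n k) := by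
  set F : ChanState N K 1 → ℝ := fun s => ∑ k, (1 - ∏ n ∈ Q, (1 - Cmat s n k))
  have hint := integrable_service (μ := μ) hC hI
  calc ∑ n ∈ Q, ∫ ω, service (C ω) (I ω) n ∂μ
      = ∫ ω, ∑ n ∈ Q, service (C ω) (I ω) n ∂μ := (integral_finsetSum Q fun n _ => hint n).symm
    _ ≤ ∫ ω, F (C ω) ∂μ :=
        integral_mono (integrable_finsetSum Q fun n _ => hint n)
          (integrable_comp_of_fintype hC F) fun ω => sum_service_le (C ω) (I ω) Q
    _ = ∑ s, bernoulliPi p s * F s := integral_comp_eq_sum_s7 hC (bernoulliPi_nonneg hp) hdist F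
    _ = K - ∑ k, ∏ n ∈ Q, (1 - p n k) := by
        simp only [F, mul_sum]
        rw [sum_comm]
        simp [mul_sub, sum_sub_distrib, sum_bernoulliPi, sum_bernoulliPi_mul_prod_one_sub]

end Service

section LindleyRecursion

variable {Ω : Type*}

def IsLindleyRec (X D A : ℕ → Ω → ℝ) : Prop :=
  ∀ t ω, X (t + 1) ω = max (X t ω - D (t + 1) ω) 0 + A (t + 1) ω

variable {X D A : ℕ → Ω → ℝ}

theorem IsLindleyRec.nonneg (h : IsLindleyRec X D A) (hX₀ : ∀ ω, 0 ≤ X 0 ω)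
    (hA : ∀ t ω, 0 ≤ A t ω) (t : ℕ) (ω : Ω) : 0 ≤ X t ω := by
  cases t with
  | zero => exact hX₀ ω
  | succ t => rw [h t ω]; exact add_nonneg (le_max_right _ _) (hA _ ω)

variable [MeasurableSpace Ω] {μ : Measure Ω}

theorem IsLindleyRec.integrable (h : IsLindleyRec X D A) (hX₀ : Integrable (X 0) μ)
    (hD : ∀ t, Integrable (D t) μ) (hA : ∀ t, Integrable (A t) μ) (t : ℕ) :
    Integrable (X t) μ := by
  induction t with
  | zero => exact hX₀
  | succ t ih =>
    rw [show X (t + 1) = _ from funext (h t)]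
    exact (ih.sub (hD _)).pos_part.add (hA _)

theorem IsLindleyRec.integral_sub_add_le (h : IsLindleyRec X D A) (t : ℕ)
    (hX : Integrable (X t) μ) (hX' : Integrable (X (t + 1)) μ) (hD : Integrable (D (t + 1)) μ)
    (hA : Integrable (A (t + 1)) μ) :
    ∫ ω, X t ω ∂μ - ∫ ω, D (t + 1) ω ∂μ + ∫ ω, A (t + 1) ω ∂μ ≤ ∫ ω, X (t + 1) ω ∂μ := by
  calc ∫ ω, X t ω ∂μ - ∫ ω, D (t + 1) ω ∂μ + ∫ ω, A (t + 1) ω ∂μ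
      = ∫ ω, (X t ω - D (t + 1) ω + A (t + 1) ω) ∂μ := by
        rw [integral_add (f := fun ω => X t ω - D (t + 1) ω) (hX.sub hD) hA, integral_sub hX hD]
    _ ≤ ∫ ω, X (t + 1) ω ∂μ := integral_mono ((hX.sub hD).add hA) hX' fun ω => by
        simp [h t ω]

end LindleyRecursion

section CesaroMeans

variable {x a : ℕ → ℝ} {c : ℝ}

theorem sum_Icc_sub_mul_le_of_drift (hx₀ : 0 ≤ x 0) (h : ∀ t, x t + a (t + 1) - c ≤ x (t + 1))
    (t : ℕ) : ∑ τ ∈ Icc 1 t, a τ - t * c ≤ x t := by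
  induction t with
  | zero => simpa using hx₀
  | succ t ih =>
    rw [sum_Icc_succ_top (Nat.le_add_left 1 t)]
    push_cast
    linarith [h t]

theorem not_eventually_mul_le_of_cesaro_le (hx : ∀ t, 0 ≤ x t) {B : ℝ}
    (hB : ∀ t : ℕ, 1 ≤ t → (∑ τ ∈ range t, x τ) / t ≤ B) {ε : ℝ} (hε : 0 < ε) :
    ¬ ∀ᶠ t : ℕ in atTop, ε * t ≤ x t := by
  intro hlin
  obtain ⟨t₀, ht₀⟩ := eventually_atTop.1 hlin
  obtain ⟨m, htm, hm, hBm⟩ := ((eventually_ge_atTop t₀).and ((eventually_ge_atTop 1).and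
    (tendsto_natCast_atTop_atTop.eventually_gt_atTop (2 * B / ε)))).exists
  have hm' : (0 : ℝ) < m := by exact_mod_cast hm
  -- the terms with index in `[m, 2m)` alone contribute `m · εm`
  have hsum : m * (ε * m) ≤ ∑ τ ∈ range (2 * m), x τ := by
    calc m * (ε * m) = ∑ _τ ∈ Ico m (2 * m), ε * m := by simp [two_mul]
      _ ≤ ∑ τ ∈ Ico m (2 * m), x τ := sum_le_sum fun τ hτ => by
          have hτ' : m ≤ τ := (mem_Ico.1 hτ).1
          have : (m : ℝ) ≤ τ := by exact_mod_cast hτ'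
          nlinarith [ht₀ τ (htm.trans hτ')]
      _ ≤ ∑ τ ∈ range (2 * m), x τ :=
          sum_le_sum_of_subset_of_nonneg (fun τ hτ => mem_range.2 (mem_Ico.1 hτ).2)
            fun τ _ _ => hx τ
  have hcesaro := hB (2 * m) (by omega)
  rw [div_le_iff₀ (by positivity)] at hcesaro
  rw [div_lt_iff₀ hε] at hBm
  push_cast at hcesaro
  nlinarith

theorem le_of_drift_of_cesaro_le (hx : ∀ t, 0 ≤ x t) (h : ∀ t, x t + a (t + 1) - c ≤ x (t + 1))
    {B : ℝ} (hB : ∀ t : ℕ, 1 ≤ t → (∑ τ ∈ range t, x τ) / t ≤ B) {L : ℝ}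
    (ha : Tendsto (fun t : ℕ => (∑ τ ∈ Icc 1 t, a τ) / t) atTop (nhds L)) : L ≤ c := by
  by_contra! hc
  refine not_eventually_mul_le_of_cesaro_le hx hB (half_pos (sub_pos.2 hc)) ?_
  filter_upwards [ha.eventually (eventually_gt_nhds (by linarith : c + (L - c) / 2 < L)),
    eventually_ge_atTop 1] with t ht ht1
  have htpos : (0 : ℝ) < t := by exact_mod_cast ht1
  rw [lt_div_iff₀ htpos] at ht
  linarith [sum_Icc_sub_mul_le_of_drift (hx 0) h t]

end CesaroMeans

theorem stmt_7_general
    {N K : ℕ}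
    (p : Fin N → Fin K → ℝ) (hp : ∀ n k, p n k ∈ Set.Icc (0 : ℝ) 1)
    {Ω : Type} [MeasurableSpace Ω] (μ : Measure Ω) [IsProbabilityMeasure μ]
    (X0 : Ω → Fin N → ℝ) (hX0nn : ∀ ω n, 0 ≤ X0 ω n)
    (hX0int : ∀ n, Integrable (fun ω => X0 ω n) μ)
    (A : ℕ → Ω → Fin N → ℝ) (hAm : ∀ t, Measurable (A t))
    (hAnn : ∀ t ω n, 0 ≤ A t ω n)
    (hA2int : ∀ t n, Integrable (fun ω => (A t ω n) ^ 2) μ)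
    (Cch : ℕ → Ω → ChanState N K 1) (hCm : ∀ t, Measurable (Cch t))
    (hCdist : ∀ t, 1 ≤ t → ∀ s, μ {ω | Cch t ω = s} = ENNReal.ofReal (bernoulliPi p s))
    (Ipol : ℕ → Ω → Fin K → Fin N) (hIm : ∀ t, Measurable (Ipol t))
    (X : ℕ → Ω → Fin N → ℝ) (hX0eq : X 0 = X0)
    (hXrec : ∀ t, 1 ≤ t → ∀ ω n,
      X t ω n = max (X (t - 1) ω n - ∑ k, Cmat (Cch t ω) n k * allocMat (Ipol t ω) n k) 0
        + A t ω n)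
    (hstable : ∀ n, ∃ B : ℝ, ∀ t : ℕ, 1 ≤ t →
      (∑ τ ∈ Finset.range t, ∫ ω, X τ ω n ∂μ) / t ≤ B)
    (Abar : Fin N → ℝ)
    (hAbar : ∀ n, Filter.Tendsto
      (fun t : ℕ => (∑ τ ∈ Finset.Icc 1 t, ∫ ω, A τ ω n ∂μ) / t)
      Filter.atTop (nhds (Abar n))) :
    ∀ Q : Finset (Fin N), Q.Nonempty →
      ∑ n ∈ Q, Abar n ≤ (K : ℝ) - ∑ k, ∏ n ∈ Q, (1 - p n k) := by
  intro Q _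
  have hrec : ∀ n, IsLindleyRec (fun t ω => X t ω n)
      (fun t ω => service (Cch t ω) (Ipol t ω) n) (fun t ω => A t ω n) :=
    fun n t ω => hXrec (t + 1) t.succ_pos ω n
  have hAint : ∀ t n, Integrable (fun ω => A t ω n) μ := fun t n =>
    ((memLp_two_iff_integrable_sq ((hAm t).eval (a := n)).aestronglyMeasurable).2
      (hA2int t n)).integrable one_le_two
  have hXint : ∀ t n, Integrable (fun ω => X t ω n) μ := fun t n =>
    (hrec n).integrable (hX0eq ▸ hX0int n) (fun t => integrable_service (hCm t) (hIm t) n)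
      (fun t => hAint t n) t
  choose B hB using hstable
  refine le_of_drift_of_cesaro_le (x := fun t => ∑ n ∈ Q, ∫ ω, X t ω n ∂μ)
    (a := fun t => ∑ n ∈ Q, ∫ ω, A t ω n ∂μ) (B := ∑ n ∈ Q, B n) ?_ ?_ ?_ ?_
  · exact fun t => sum_nonneg fun n _ => integral_nonneg
      ((hrec n).nonneg (fun ω => hX0eq ▸ hX0nn ω n) (fun t ω => hAnn t ω n) t)
  · intro t
    have hservice := integral_sum_service_le hp (hCm (t + 1)) (hCdist (t + 1) t.succ_pos)
      (hIm (t + 1)) Q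
    have hdrift := sum_le_sum fun n (_ : n ∈ Q) => (hrec n).integral_sub_add_le t (hXint t n)
      (hXint (t + 1) n) (integrable_service (hCm (t + 1)) (hIm (t + 1)) n) (hAint (t + 1) n)
    simp only [sum_add_distrib, sum_sub_distrib] at hdrift
    linarith
  · intro t ht
    rw [sum_comm, sum_div]
    exact sum_le_sum fun n _ => hB n t ht
  · simpa only [sum_comm (s := Icc 1 _), sum_div] using tendsto_finsetSum Q fun n _ => hAbar n

/-- for ON-OFF channels (M = 1) with mutually independent Bernoulli
entries, strong stability implies Σ_{n∈Q} Ā_n ≤ K − Σ_k ∏_{n∈Q}(1 − p_{n,k}) for every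
nonempty Q ⊆ {1,…,N}. -/
theorem stmt_7
    {N K : ℕ} [NeZero N] [NeZero K]
    (p : Fin N → Fin K → ℝ) (hp : ∀ n k, p n k ∈ Set.Icc (0 : ℝ) 1)
    {Ω : Type} [MeasurableSpace Ω] (μ : Measure Ω) [IsProbabilityMeasure μ]
    (X0 : Ω → Fin N → ℝ) (hX0m : Measurable X0) (hX0nn : ∀ ω n, 0 ≤ X0 ω n)
    (hX0int : ∀ n, Integrable (fun ω => X0 ω n) μ)
    (A : ℕ → Ω → Fin N → ℝ) (hAm : ∀ t, Measurable (A t))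
    (hAnn : ∀ t ω n, 0 ≤ A t ω n)
    (Amax : ℝ)
    (hA2int : ∀ t n, Integrable (fun ω => (A t ω n) ^ 2) μ)
    (hA2 : ∀ t n, ∫ ω, (A t ω n) ^ 2 ∂μ ≤ Amax ^ 2)
    (Cch : ℕ → Ω → ChanState N K 1) (hCm : ∀ t, Measurable (Cch t))
    (hCdist : ∀ t, 1 ≤ t → ∀ s, μ {ω | Cch t ω = s} = ENNReal.ofReal (bernoulliPi p s))
    (Ipol : ℕ → Ω → Fin K → Fin N) (hIm : ∀ t, Measurable (Ipol t))
    (X : ℕ → Ω → Fin N → ℝ) (hX0eq : X 0 = X0)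
    (hXrec : ∀ t, 1 ≤ t → ∀ ω n,
      X t ω n = max (X (t - 1) ω n - ∑ k, Cmat (Cch t ω) n k * allocMat (Ipol t ω) n k) 0
        + A t ω n)
    (hstable : ∀ n, ∃ B : ℝ, ∀ t : ℕ, 1 ≤ t →
      (∑ τ ∈ Finset.range t, ∫ ω, X τ ω n ∂μ) / t ≤ B)
    (Abar : Fin N → ℝ)
    (hAbar : ∀ n, Filter.Tendsto
      (fun t : ℕ => (∑ τ ∈ Finset.Icc 1 t, ∫ ω, A τ ω n ∂μ) / t)
      Filter.atTop (nhds (Abar n))) :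
    ∀ Q : Finset (Fin N), Q.Nonempty →
      ∑ n ∈ Q, Abar n ≤ (K : ℝ) - ∑ k, ∏ n ∈ Q, (1 - p n k) :=
  stmt_7_general p hp μ X0 hX0nn hX0int A hAm hAnn hA2int Cch hCm hCdist Ipol hIm X hX0eq hXrec
    hstable Abar hAbar
end

section
/- (Reduction to finitely many inequalities.) The region cut out over nonnegative weight vectors is already cut out by the finitely many weight vectors in W^N: {x ∈ ℝ^N : x_n ≥ 0 for all n, and Σ_{n=1}^N α_n x_n ≤ b(α) for every α ∈ ℝ^N with nonnegative entries} = {x ∈ ℝ^N : x_n ≥ 0 for all n, and Σ_{n=1}^N α_n x_n ≤ b(α) for every α ∈ W^N}. -/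
open MeasureTheory ProbabilityTheory Finset Filter

/-!
On the set `compCone M α` of vectors that keep every comparison `α j * m' ≤ α i * m`
(`m, m' ≤ M`) of `α`, a single policy, max-weight for `α` in every state, is max-weight for each
vector, so `b` is linear there: `b β = β ⬝ᵥ R` for a rate vector `R`. It therefore suffices to
write every `α ≥ 0` as a conical combination of vectors of `W^N` lying in `compCone M α`.
This goes by induction on the number of comparisons `α` fails. If the coordinates tied to one of
them through chains of ties `α i * m = α j * m' ≠ 0` carry the whole support, a spanning tree of
ties shows that a positive multiple of `α` lies in `W^N`, each tie contributing one factor.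
Otherwise, scaling such a tied class down and up until a new tie (or a zero) appears writes `α`
as a conical combination of two vectors of its cone that satisfy more comparisons.
-/

open Matrix Relation

variable {N M : ℕ}

section Comparisons

def scaledVal (α : Fin N → ℝ) (p : Fin N × Fin (M + 1)) : ℝ := α p.1 * (p.2 : ℕ)

noncomputable def comparisons (M : ℕ) (α : Fin N → ℝ) :
    Finset ((Fin N × Fin (M + 1)) × (Fin N × Fin (M + 1))) :=
  univ.filter fun pq => scaledVal α pq.2 ≤ scaledVal α pq.1

def compCone (M : ℕ) (α : Fin N → ℝ) : Set (Fin N → ℝ) :=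
  {β | comparisons M α ⊆ comparisons M β}

lemma mem_comparisons {α : Fin N → ℝ} {pq : (Fin N × Fin (M + 1)) × (Fin N × Fin (M + 1))} :
    pq ∈ comparisons M α ↔ scaledVal α pq.2 ≤ scaledVal α pq.1 := by
  simp [comparisons]

lemma scaledVal_add_smul (α d : Fin N → ℝ) (t : ℝ) (p : Fin N × Fin (M + 1)) :
    scaledVal (α + t • d) p = scaledVal α p + t * scaledVal d p := by
  simp only [scaledVal, Pi.add_apply, Pi.smul_apply, smul_eq_mul]
  ring

lemma scaledVal_neg (d : Fin N → ℝ) (p : Fin N × Fin (M + 1)) :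
    scaledVal (-d) p = -scaledVal d p := by
  simp [scaledVal]

lemma mem_compCone_self (α : Fin N → ℝ) : α ∈ compCone M α :=
  Finset.Subset.refl _

lemma compCone_subset {α β : Fin N → ℝ} (h : β ∈ compCone M α) :
    compCone M β ⊆ compCone M α :=
  fun _ hγ => Finset.Subset.trans h hγ

lemma smul_mem_compCone {c : ℝ} (hc : 0 < c) (α : Fin N → ℝ) : c • α ∈ compCone M α := by
  intro pq hpq
  rw [mem_comparisons] at hpq ⊢
  simp only [scaledVal, Pi.smul_apply, smul_eq_mul, mul_assoc] at hpq ⊢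
  exact mul_le_mul_of_nonneg_left hpq hc.le

lemma nonneg_of_mem_compCone (hM : 1 ≤ M) {α β : Fin N → ℝ} (hα : 0 ≤ α)
    (hβ : β ∈ compCone M α) : 0 ≤ β := by
  intro n
  have h := @hβ ((n, ⟨1, by omega⟩), (n, 0)) (mem_comparisons.2 (by simpa [scaledVal] using hα n))
  simpa [mem_comparisons, scaledVal] using h

end Comparisons

section Linearity

variable {K : ℕ}

lemma weight_eq_sum_col (α : Fin N → ℝ) (c : Fin N → Fin K → ℝ) (f : Fin K → Fin N) :
    weight α c f = ∑ k, α (f k) * c (f k) k := by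
  rw [weight, Finset.sum_comm]
  refine Finset.sum_congr rfl fun k _ => ?_
  simp [allocMat]

lemma weight_eq_sum_row (α : Fin N → ℝ) (c : Fin N → Fin K → ℝ) (f : Fin K → Fin N) :
    weight α c f = ∑ n, α n * ∑ k, c n k * allocMat f n k := by
  simp only [weight, Finset.mul_sum, mul_assoc]

lemma maxWeight_eq_weight [NeZero N] {α β : Fin N → ℝ} (hβ : β ∈ compCone M α)
    (s : ChanState N K M) {g : Fin K → Fin N}
    (hg : ∀ k n, scaledVal α (n, s n k) ≤ scaledVal α (g k, s (g k) k)) :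
    maxWeight β (Cmat s) = weight β (Cmat s) g := by
  refine le_antisymm (Finset.sup'_le _ _ fun f _ => ?_) (Finset.le_sup' _ (mem_univ g))
  rw [weight_eq_sum_col, weight_eq_sum_col]
  exact Finset.sum_le_sum fun k _ => mem_comparisons.1 <|
    hβ (mem_comparisons (pq := ((g k, s (g k) k), (f k, s (f k) k))).2 (hg k (f k)))

/-- The policy `g` chooses a max-weight allocation for `α` in every state. -/
lemma exists_bCoef_eq_dotProduct_rateVec [NeZero N] (π : ChanState N K M → ℝ)
    (α : Fin N → ℝ) :
    ∃ g : ChanState N K M → Fin K → Fin N, ∀ β ∈ compCone M α, bCoef π β = β ⬝ᵥ rateVec π g := by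
  choose g hg using fun (s : ChanState N K M) (k : Fin K) =>
    Finite.exists_max fun n => scaledVal α (n, s n k)
  refine ⟨g, fun β hβ => ?_⟩
  simp only [bCoef, fun s => maxWeight_eq_weight hβ s (hg s), weight_eq_sum_row, dotProduct,
    rateVec, Finset.mul_sum]
  rw [Finset.sum_comm]
  exact Finset.sum_congr rfl fun n _ => Finset.sum_congr rfl fun s _ =>
    Finset.sum_congr rfl fun k _ => by ring

lemma dotProduct_le_dotProduct_of_mem_hull {ι : Type*} [Fintype ι] {s : Set (ι → ℝ)}
    {u v : ι → ℝ} (h : ∀ β ∈ s, β ⬝ᵥ u ≤ β ⬝ᵥ v) {α : ι → ℝ} (hα : α ∈ PointedCone.hull ℝ s) :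
    α ⬝ᵥ u ≤ α ⬝ᵥ v := by
  induction hα using Submodule.span_induction with
  | mem β hβ => exact h β hβ
  | zero => simp
  | add β γ _ _ hβ hγ => simpa only [add_dotProduct] using add_le_add hβ hγ
  | smul c β _ hβ =>
    rw [Nonneg.mk_smul, smul_dotProduct, smul_dotProduct, smul_eq_mul, smul_eq_mul]
    exact mul_le_mul_of_nonneg_left hβ c.2

end Linearity

section Products

def IsBoundedProd (M n : ℕ) (w : ℝ) : Prop :=
  ∃ l : List ℕ, l.length ≤ n ∧ (∀ a ∈ l, a ≤ M) ∧ w = (l.map (Nat.cast : ℕ → ℝ)).prod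

lemma isBoundedProd_one (n : ℕ) : IsBoundedProd M n 1 :=
  ⟨[], by simp, by simp, by simp⟩

lemma IsBoundedProd.mono {n n' : ℕ} {w : ℝ} (h : IsBoundedProd M n w) (hn : n ≤ n') :
    IsBoundedProd M n' w :=
  let ⟨l, hl, hlM, hw⟩ := h
  ⟨l, hl.trans hn, hlM, hw⟩

lemma IsBoundedProd.natCast_mul {n m : ℕ} {w : ℝ} (h : IsBoundedProd M n w) (hm : m ≤ M) :
    IsBoundedProd M (n + 1) (m * w) := by
  obtain ⟨l, hl, hlM, rfl⟩ := h
  refine ⟨m :: l, by simpa using hl, ?_, by simp⟩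
  simpa [hm] using hlM

lemma IsBoundedProd.mem_Wset (hM : 1 ≤ M) {w : ℝ} (hw : IsBoundedProd M (N - 1) w) :
    w ∈ Wset N M := by
  obtain ⟨l, hl, hlM, rfl⟩ := hw
  set l' := l ++ List.replicate (N - 1 - l.length) 1
  have hl' : N - 1 = l'.length := by simp [l']; omega
  refine ⟨fun t => l'[(t.cast hl').1], fun t => ?_, ?_⟩ <;> dsimp only
  · rcases List.mem_append.1 (List.getElem_mem (l := l') (t.cast hl').2) with h | h
    · exact hlM _ h
    · rw [List.eq_of_mem_replicate h]; exact hM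
  · rw [Fin.prod_congr' (fun t : Fin l'.length => ((l'[t.1] : ℕ) : ℝ)) hl',
      Fin.prod_univ_fun_getElem]
    simp [l']

lemma zero_mem_Wset (hN : 2 ≤ N) : (0 : ℝ) ∈ Wset N M :=
  ⟨fun _ => 0, fun _ => Nat.zero_le _, by
    rw [Finset.prod_eq_zero (i := ⟨0, by omega⟩) (mem_univ _) (by simp)]⟩

lemma Wset_nonneg {w : ℝ} (hw : w ∈ Wset N M) : 0 ≤ w := by
  obtain ⟨m, _, rfl⟩ := hw
  positivity

end Products

section Linked

variable {α : Fin N → ℝ}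

def Linked (M : ℕ) (α : Fin N → ℝ) (i j : Fin N) : Prop :=
  ∃ m m' : Fin (M + 1), scaledVal α (i, m) ≠ 0 ∧ scaledVal α (i, m) = scaledVal α (j, m')

lemma Linked.symm {i j : Fin N} (h : Linked M α i j) : Linked M α j i :=
  let ⟨m, m', hne, heq⟩ := h
  ⟨m', m, heq ▸ hne, heq.symm⟩

lemma Linked.exists_insert {i j : Fin N} (hij : Linked M α i j) {U : Finset (Fin N)} (hi : i ∈ U)
    {n : ℕ} {μ : ℝ} (hμ : 0 < μ) (hU : ∀ k ∈ U, IsBoundedProd M n (μ * α k)) :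
    ∃ μ' > 0, ∀ k ∈ insert j U, IsBoundedProd M (n + 1) (μ' * α k) := by
  obtain ⟨m, m', hne, heq⟩ := hij
  simp only [scaledVal] at hne heq
  have hm' : 0 < (m' : ℕ) := Nat.pos_of_ne_zero fun h => hne (by simp [heq, h])
  refine ⟨μ * (m' : ℕ), by positivity, fun k hk => ?_⟩
  rcases mem_insert.1 hk with rfl | hk
  · convert (hU i hi).natCast_mul (Nat.lt_succ_iff.1 m.2) using 1
    linear_combination (-μ) * heq
  · convert (hU k hk).natCast_mul (Nat.lt_succ_iff.1 m'.2) using 1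
    ring

/-- Growing a maximal set of coordinates that admit a common scaling into bounded products:
each linked neighbour costs one more factor, so a linked component costs at most `N - 1`. -/
lemma exists_forall_reachable_isBoundedProd {i₀ : Fin N} (hi₀ : 0 < α i₀) :
    ∃ μ > 0, ∀ j, ReflTransGen (Linked M α) i₀ j → IsBoundedProd M (N - 1) (μ * α j) := by
  classical
  set F := (univ : Finset (Finset (Fin N))).filter fun U =>
    i₀ ∈ U ∧ ∃ μ > 0, ∀ k ∈ U, IsBoundedProd M (#U - 1) (μ * α k)
  have hF : {i₀} ∈ F := by
    refine mem_filter.2 ⟨mem_univ _, mem_singleton_self _, (α i₀)⁻¹, by positivity, ?_⟩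
    simpa [inv_mul_cancel₀ hi₀.ne'] using isBoundedProd_one 0
  obtain ⟨U, hUF, hUmax⟩ := F.exists_max_image card ⟨_, hF⟩
  obtain ⟨-, hi₀U, μ, hμ, hU⟩ := mem_filter.1 hUF
  have hcardU : #U - 1 ≤ N - 1 := by simpa using Nat.sub_le_sub_right (card_le_univ U) 1
  refine ⟨μ, hμ, fun j hj => (hU j ?_).mono hcardU⟩
  induction hj with
  | refl => exact hi₀U
  | @tail b c _ hbc hb =>
    by_contra hc
    obtain ⟨μ', hμ', hU'⟩ := hbc.exists_insert hb hμ hU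
    have hcard : #(insert c U) = #U + 1 := card_insert_of_notMem hc
    have := hUmax (insert c U) (mem_filter.2 ⟨mem_univ _, mem_insert_of_mem hi₀U, μ', hμ',
      by rw [hcard]; convert hU' using 3; have := card_pos.2 ⟨_, hi₀U⟩; omega⟩)
    omega

end Linked

section Decomposition

lemma exists_pos_first_root {ι : Type*} (s : Finset ι) (a b : ι → ℝ) (ha : ∀ k ∈ s, 0 ≤ a k)
    (hab : ∀ k ∈ s, a k = 0 → 0 ≤ b k) (hb : ∃ k ∈ s, b k < 0) :
    ∃ t > 0, (∀ k ∈ s, 0 ≤ a k + t * b k) ∧ ∃ k ∈ s, 0 < a k ∧ a k + t * b k = 0 := by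
  classical
  obtain ⟨k₀, hk₀, hmin⟩ := (s.filter (b · < 0)).exists_min_image (fun k => a k / -b k)
    (by simpa [Finset.Nonempty] using hb)
  obtain ⟨hk₀s, hbk₀⟩ := mem_filter.1 hk₀
  have hak₀ : 0 < a k₀ := (ha k₀ hk₀s).lt_of_ne' fun h => (hab k₀ hk₀s h).not_gt hbk₀
  refine ⟨a k₀ / -b k₀, div_pos hak₀ (neg_pos.2 hbk₀), fun k hk => ?_, k₀, hk₀s, hak₀, ?_⟩
  · rcases lt_or_ge (b k) 0 with hbk | hbk
    · have := (le_div_iff₀ (neg_pos.2 hbk)).1 (hmin k (mem_filter.2 ⟨hk, hbk⟩))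
      linarith
    · exact add_nonneg (ha k hk) (mul_nonneg (div_pos hak₀ (neg_pos.2 hbk₀)).le hbk)
  · rw [div_neg, neg_mul, div_mul_cancel₀ _ hbk₀.ne, add_neg_cancel]

variable {α : Fin N → ℝ}

/-- Move from `α` along `d` until a strict comparison of `α` becomes a tie. -/
lemma mem_compCone_or_exists_comparisons_ssubset {d : Fin N → ℝ}
    (hd : ∀ p q : Fin N × Fin (M + 1), scaledVal α p = scaledVal α q →
      scaledVal d p = scaledVal d q) :
    d ∈ compCone M α ∨ ∃ t : ℝ, 0 < t ∧ comparisons M α ⊂ comparisons M (α + t • d) := by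
  by_cases hb : ∃ pq ∈ comparisons M α, scaledVal d pq.1 - scaledVal d pq.2 < 0
  · right
    obtain ⟨t, ht, hnonneg, pq, -, hpos, hzero⟩ := exists_pos_first_root (comparisons M α)
      (fun pq => scaledVal α pq.1 - scaledVal α pq.2)
      (fun pq => scaledVal d pq.1 - scaledVal d pq.2)
      (fun pq hpq => sub_nonneg.2 (mem_comparisons.1 hpq))
      (fun pq _ h => (hd _ _ (sub_eq_zero.1 h)).symm ▸ (sub_self _).ge) hb
    refine ⟨t, ht, (Finset.ssubset_iff_of_subset fun pq hpq => ?_).2 ⟨(pq.2, pq.1), ?_, ?_⟩⟩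
    · have := hnonneg pq hpq
      rw [mem_comparisons, scaledVal_add_smul, scaledVal_add_smul]
      linarith
    · rw [mem_comparisons, scaledVal_add_smul, scaledVal_add_smul]
      linarith
    · rw [mem_comparisons, not_le]
      linarith
  · left
    push Not at hb
    exact fun pq hpq => mem_comparisons.2 (sub_nonneg.1 (hb pq hpq))

/-- Scaling the coordinates of a link-closed set `V` up and down moves `α` to two vectors with
strictly more comparisons, and `α` is a conical combination of them. -/
lemma mem_hull_of_linked_closed (hM : 1 ≤ M) (hα : 0 ≤ α) {V : Finset (Fin N)}
    (hV : ∀ i j, Linked M α i j → i ∈ V → j ∈ V) {i j : Fin N} (hi : i ∈ V) (hαi : α i ≠ 0)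
    (hj : j ∉ V) (hαj : α j ≠ 0) {S : Set (Fin N → ℝ)}
    (IH : ∀ β, comparisons M α ⊂ comparisons M β → β ∈ PointedCone.hull ℝ S) :
    α ∈ PointedCone.hull ℝ S := by
  set d : Fin N → ℝ := fun k => if k ∈ V then α k else 0 with hd_def
  have hd_val : ∀ p : Fin N × Fin (M + 1), scaledVal d p = if p.1 ∈ V then scaledVal α p else 0 :=
    fun p => by by_cases hp : p.1 ∈ V <;> simp [scaledVal, hd_def, hp]
  have hd : ∀ p q : Fin N × Fin (M + 1), scaledVal α p = scaledVal α q →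
      scaledVal d p = scaledVal d q := by
    intro p q hpq
    by_cases h0 : scaledVal α p = 0
    · simp [hd_val, h0, ← hpq]
    · have hlink : Linked M α p.1 q.1 := ⟨p.2, q.2, h0, hpq⟩
      have hV' : p.1 ∈ V ↔ q.1 ∈ V := ⟨hV _ _ hlink, hV _ _ hlink.symm⟩
      simp only [hd_val, hV', hpq]
  have hneg : -d ∉ compCone M α := fun h => by
    have := @h ((i, ⟨1, by omega⟩), (i, 0)) (mem_comparisons.2 (by simpa [scaledVal] using hα i))
    simp [mem_comparisons, scaledVal, hd_def, hi] at this
    exact hαi (le_antisymm this (hα i))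
  obtain ⟨t₁, ht₁, h₁⟩ := (mem_compCone_or_exists_comparisons_ssubset
    (d := -d) fun p q hpq => by simp [scaledVal_neg, hd p q hpq]).resolve_left hneg
  rcases mem_compCone_or_exists_comparisons_ssubset hd with hdα | ⟨t₂, ht₂, h₂⟩
  · have hnew : comparisons M α ⊂ comparisons M d := by
      refine (Finset.ssubset_iff_of_subset hdα).2 ⟨((j, 0), (j, ⟨1, by omega⟩)), ?_, ?_⟩
      · simp [mem_comparisons, scaledVal, hd_def, hj]
      · simpa [mem_comparisons, scaledVal] using (hα j).lt_of_ne' hαj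
    convert add_mem (IH _ h₁) (PointedCone.smul_mem _ ht₁.le (IH d hnew)) using 1
    module
  · convert add_mem (PointedCone.smul_mem _ (div_pos ht₂ (add_pos ht₁ ht₂)).le (IH _ h₁))
      (PointedCone.smul_mem _ (div_pos ht₁ (add_pos ht₁ ht₂)).le (IH _ h₂)) using 1
    ext k
    simp only [Pi.add_apply, Pi.smul_apply, Pi.neg_apply, smul_eq_mul]
    field_simp
    ring

lemma exists_pos_smul_mem_pi_Wset (hN : 2 ≤ N) (hM : 1 ≤ M) {i₀ : Fin N}
    (hi₀ : 0 < α i₀) (hreach : ∀ j, α j ≠ 0 → ReflTransGen (Linked M α) i₀ j) :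
    ∃ μ : ℝ, 0 < μ ∧ μ • α ∈ Set.univ.pi fun _ => Wset N M := by
  obtain ⟨μ, hμ, hprod⟩ := exists_forall_reachable_isBoundedProd (M := M) hi₀
  refine ⟨μ, hμ, Set.mem_univ_pi.2 fun j => ?_⟩
  by_cases hj : α j = 0
  · simpa [hj] using zero_mem_Wset hN
  · exact (hprod j (hreach j hj)).mem_Wset hM

theorem mem_hull_compCone_inter_pi_Wset (hN : 2 ≤ N) (hM : 1 ≤ M) (hα : 0 ≤ α) :
    α ∈ PointedCone.hull ℝ (compCone M α ∩ Set.univ.pi fun _ => Wset N M) := by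
  classical
  induction hc : #(comparisons M α)ᶜ using Nat.strong_induction_on generalizing α with
  | _ c IH =>
  subst hc
  have IH' : ∀ β, comparisons M α ⊂ comparisons M β →
      β ∈ PointedCone.hull ℝ (compCone M α ∩ Set.univ.pi fun _ => Wset N M) := fun β h =>
    Submodule.span_mono (Set.inter_subset_inter_left _ (compCone_subset h.subset))
      (IH _ (card_lt_card (compl_ssubset_compl.2 h)) (nonneg_of_mem_compCone hM hα h.subset) rfl)
  obtain rfl | ⟨i₀, hi₀⟩ := eq_or_ne α 0 |>.imp id Function.ne_iff.1
  · exact zero_mem _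
  have hi₀pos : 0 < α i₀ := (hα i₀).lt_of_ne' hi₀
  set V := univ.filter (ReflTransGen (Linked M α) i₀)
  by_cases hV : ∀ j, α j ≠ 0 → j ∈ V
  · obtain ⟨μ, hμ, hμα⟩ := exists_pos_smul_mem_pi_Wset hN hM hi₀pos fun j hj => by
      simpa [V] using hV j hj
    convert PointedCone.smul_mem _ (inv_pos.2 hμ).le
      (PointedCone.subset_hull (R := ℝ) (Set.mem_inter (smul_mem_compCone hμ α) hμα)) using 1
    rw [inv_smul_smul₀ hμ.ne']
  · push Not at hV
    obtain ⟨j, hj, hjV⟩ := hV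
    have hVclosed : ∀ a b, Linked M α a b → a ∈ V → b ∈ V := fun a b hab ha =>
      mem_filter.2 ⟨mem_univ b, (mem_filter.1 ha).2.tail hab⟩
    exact mem_hull_of_linked_closed hM hα hVclosed (mem_filter.2 ⟨mem_univ _, .refl⟩) hi₀ hjV hj
      IH'

end Decomposition

theorem stmt_13_general
    {N K M : ℕ} (hN : 2 ≤ N) [NeZero N] (hM : 1 ≤ M)
    (π : ChanState N K M → ℝ) :
    {x : Fin N → ℝ | (∀ n, 0 ≤ x n) ∧
        ∀ α : Fin N → ℝ, (∀ n, 0 ≤ α n) → ∑ n, α n * x n ≤ bCoef π α}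
      = {x : Fin N → ℝ | (∀ n, 0 ≤ x n) ∧
          ∀ α : Fin N → ℝ, (∀ n, α n ∈ Wset N M) → ∑ n, α n * x n ≤ bCoef π α} := by
  ext x
  refine and_congr_right fun _ =>
    ⟨fun h α hα => h α fun n => Wset_nonneg (hα n), fun h α hα => ?_⟩
  obtain ⟨g, hg⟩ := exists_bCoef_eq_dotProduct_rateVec π α
  show α ⬝ᵥ x ≤ bCoef π α
  rw [hg α (mem_compCone_self α)]
  refine dotProduct_le_dotProduct_of_mem_hull (fun β hβ => ?_)
    (mem_hull_compCone_inter_pi_Wset hN hM hα)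
  rw [← hg β hβ.1]
  exact h β (Set.mem_univ_pi.1 hβ.2)

/-- the region cut out (within the nonnegative orthant) by the
inequalities Σ_n α_n x_n ≤ b(α) over all nonnegative weight vectors α coincides with the
region cut out by the finitely many weight vectors in W^N. -/
theorem stmt_13
    {N K M : ℕ} (hN : 2 ≤ N) [NeZero N] [NeZero K] (hM : 1 ≤ M)
    (π : ChanState N K M → ℝ) (hπ0 : ∀ s, 0 ≤ π s) (hπ1 : ∑ s : ChanState N K M, π s = 1) :
    {x : Fin N → ℝ | (∀ n, 0 ≤ x n) ∧
        ∀ α : Fin N → ℝ, (∀ n, 0 ≤ α n) → ∑ n, α n * x n ≤ bCoef π α}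
      = {x : Fin N → ℝ | (∀ n, 0 ≤ x n) ∧
          ∀ α : Fin N → ℝ, (∀ n, α n ∈ Wset N M) → ∑ n, α n * x n ≤ bCoef π α} :=
  stmt_13_general hN hM π
end
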